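/- arXiv:2209.08278 — 2 statements merged into one kernel-verified Lean document; each statement's English description precedes it below -/
import Mathlib

section
/- Let T > 0 and let f : [0,T] → L²(0,1) be continuously differentiable with derivative f'; write f_n(t) := ⟨f(t), φ_n⟩. Then for every t ∈ [0,T], Σ_{n≥1} λ_n | ∫₀ᵗ sin(√λ_n s) f_n(s) ds |² ≤ 3 ( ‖f(t)‖²_{L²(0,1)} + ‖f(0)‖²_{L²(0,1)} + T² · sup_{s ∈ [0,T]} ‖f'(s)‖²_{L²(0,1)} ). -/
/-!
For a single coefficient `F = ⟨f, φₙ⟩` and `ω = √λₙ`, integration by parts gives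
`ω ∫₀ᵗ sin(ωs) F(s) ds = -cos(ωt) F(t) + F(0) + ∫₀ᵗ cos(ωs) F'(s) ds`, so
`λₙ |∫₀ᵗ sin(ωs) F(s) ds|² ≤ 3 (|F(t)|² + |F(0)|² + t ∫₀ᵗ |F'|²)` by Cauchy–Schwarz.
Summing over `n`, Parseval's identity turns the first two terms into `‖f t‖²` and `‖f 0‖²`,
and Bessel's inequality under the integral bounds the last by `t ∫₀ᵗ ‖f'‖² ≤ T² sup ‖f'‖²`.
-/

open MeasureTheory Real Set

noncomputable section

/-- The measure on `(0,1)`, so that `Lp ℂ 2 μ01` is the complex Hilbert space `L²(0,1)`. -/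
abbrev μ01 : Measure ℝ := MeasureTheory.volume.restrict (Set.Ioo (0:ℝ) 1)

theorem sq_intervalIntegral_le_mul_intervalIntegral_sq {g : ℝ → ℝ} {a b : ℝ} (hab : a ≤ b)
    (hg : IntervalIntegrable g volume a b)
    (hg2 : IntervalIntegrable (fun x => g x ^ 2) volume a b) :
    (∫ x in a..b, g x) ^ 2 ≤ (b - a) * ∫ x in a..b, g x ^ 2 := by
  -- `c ↦ ∫ (c - g)²` is a nonnegative quadratic, so its discriminant is `≤ 0`.
  have hquad : ∀ c : ℝ, 0 ≤ (b - a) * (c * c) + (-2 * ∫ x in a..b, g x) * c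
      + ∫ x in a..b, g x ^ 2 := by
    intro c
    have hexpand : ∫ x in a..b, (c - g x) ^ 2
        = (b - a) * (c * c) + (-2 * ∫ x in a..b, g x) * c + ∫ x in a..b, g x ^ 2 := by
      simp only [sub_sq]
      have hlin := hg.const_mul (2 * c)
      rw [intervalIntegral.integral_add (intervalIntegrable_const.sub hlin) hg2,
        intervalIntegral.integral_sub intervalIntegrable_const hlin,
        intervalIntegral.integral_const_mul]
      simp only [intervalIntegral.integral_const, smul_eq_mul]
      ring
    exact hexpand ▸ intervalIntegral.integral_nonneg hab fun x _ => sq_nonneg _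
  have hdisc := discrim_le_zero hquad
  rw [discrim] at hdisc
  linarith

theorem HilbertBasis.hasSum_norm_inner_sq {ι 𝕜 E : Type*} [RCLike 𝕜] [NormedAddCommGroup E]
    [InnerProductSpace 𝕜 E] (b : HilbertBasis ι 𝕜 E) (x : E) :
    HasSum (fun i => ‖(inner 𝕜 x (b i) : 𝕜)‖ ^ 2) (‖x‖ ^ 2) := by
  have := lp.hasSum_norm (p := 2) (by norm_num) (b.repr x)
  simpa [b.repr_apply_apply, norm_inner_symm] using this

section SineTransform

variable {E : Type*} [NormedAddCommGroup E] [NormedSpace ℝ E] [CompleteSpace E]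
  {F F' : ℝ → E} {a b : ℝ}

theorem smul_integral_sin_smul_eq (ω : ℝ)
    (hF : ∀ x ∈ uIcc a b, HasDerivWithinAt F (F' x) (uIcc a b) x)
    (hF' : IntervalIntegrable F' volume a b) :
    ω • ∫ x in a..b, sin (ω * x) • F x
      = -(cos (ω * b) • F b) + cos (ω * a) • F a + ∫ x in a..b, cos (ω * x) • F' x := by
  have hcos : ∀ x ∈ uIcc a b,
      HasDerivWithinAt (fun x => -cos (ω * x)) (ω * sin (ω * x)) (uIcc a b) x := fun x _ => by
    refine (((hasDerivAt_id x).const_mul ω).cos.neg.hasDerivWithinAt).congr_deriv ?_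
    simp [mul_comm]
  have hsin : IntervalIntegrable (fun x => ω * sin (ω * x)) volume a b :=
    (by fun_prop : Continuous fun x => ω * sin (ω * x)).intervalIntegrable _ _
  have hparts := intervalIntegral.integral_smul_deriv_eq_deriv_smul_of_hasDerivWithinAt
    hcos hF hsin hF'
  simp only [neg_smul, intervalIntegral.integral_neg] at hparts
  rw [← intervalIntegral.integral_smul]
  simp only [smul_smul]
  linear_combination (norm := module) hparts

theorem abs_mul_norm_integral_sin_smul_le (ω : ℝ) (hab : a ≤ b)
    (hF : ∀ x ∈ Icc a b, HasDerivWithinAt F (F' x) (Icc a b) x)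
    (hF' : IntervalIntegrable F' volume a b) :
    |ω| * ‖∫ x in a..b, sin (ω * x) • F x‖ ≤ ‖F b‖ + ‖F a‖ + ∫ x in a..b, ‖F' x‖ := by
  have hcos : ∀ x (v : E), ‖cos (ω * x) • v‖ ≤ ‖v‖ := fun x v => by
    rw [norm_smul, Real.norm_eq_abs]
    exact mul_le_of_le_one_left (norm_nonneg v) (abs_cos_le_one _)
  have hparts := smul_integral_sin_smul_eq ω (uIcc_of_le hab ▸ hF) hF'
  calc |ω| * ‖∫ x in a..b, sin (ω * x) • F x‖
      = ‖-(cos (ω * b) • F b) + cos (ω * a) • F a + ∫ x in a..b, cos (ω * x) • F' x‖ := by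
        rw [← hparts, norm_smul, Real.norm_eq_abs]
    _ ≤ ‖cos (ω * b) • F b‖ + ‖cos (ω * a) • F a‖ + ‖∫ x in a..b, cos (ω * x) • F' x‖ := by
        rw [← norm_neg (cos (ω * b) • F b)]
        exact norm_add₃_le
    _ ≤ ‖F b‖ + ‖F a‖ + ∫ x in a..b, ‖F' x‖ := by
        gcongr
        · exact hcos b (F b)
        · exact hcos a (F a)
        · exact intervalIntegral.norm_integral_le_of_norm_le hab
            (ae_of_all _ fun x _ => hcos x (F' x)) hF'.norm

theorem sq_mul_norm_integral_sin_smul_sq_le (ω : ℝ) (hab : a ≤ b)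
    (hF : ∀ x ∈ Icc a b, HasDerivWithinAt F (F' x) (Icc a b) x)
    (hF' : ContinuousOn F' (Icc a b)) :
    ω ^ 2 * ‖∫ x in a..b, sin (ω * x) • F x‖ ^ 2
      ≤ 3 * (‖F b‖ ^ 2 + ‖F a‖ ^ 2 + (b - a) * ∫ x in a..b, ‖F' x‖ ^ 2) := by
  have hbound := abs_mul_norm_integral_sin_smul_le ω hab hF (hF'.intervalIntegrable_of_Icc hab)
  have hCS := sq_intervalIntegral_le_mul_intervalIntegral_sq hab
    (hF'.norm.intervalIntegrable_of_Icc hab) ((hF'.norm.pow 2).intervalIntegrable_of_Icc hab)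
  calc ω ^ 2 * ‖∫ x in a..b, sin (ω * x) • F x‖ ^ 2
      = (|ω| * ‖∫ x in a..b, sin (ω * x) • F x‖) ^ 2 := by rw [mul_pow, sq_abs]
    _ ≤ (‖F b‖ + ‖F a‖ + ∫ x in a..b, ‖F' x‖) ^ 2 := by gcongr
    _ ≤ 3 * (‖F b‖ ^ 2 + ‖F a‖ ^ 2 + (∫ x in a..b, ‖F' x‖) ^ 2) := by
        nlinarith [sq_nonneg (‖F a‖ - ‖F b‖), sq_nonneg (‖F a‖ - ∫ x in a..b, ‖F' x‖),
          sq_nonneg (‖F b‖ - ∫ x in a..b, ‖F' x‖)]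
    _ ≤ 3 * (‖F b‖ ^ 2 + ‖F a‖ ^ 2 + (b - a) * ∫ x in a..b, ‖F' x‖ ^ 2) := by gcongr

end SineTransform

theorem Orthonormal.summable_intervalIntegral_norm_inner_sq {ι 𝕜 E : Type*} [RCLike 𝕜]
    [NormedAddCommGroup E] [InnerProductSpace 𝕜 E] {v : ι → E} (hv : Orthonormal 𝕜 v)
    {g : ℝ → E} {a b : ℝ} (hab : a ≤ b) (hg : ContinuousOn g (Icc a b)) :
    Summable (fun i => ∫ x in a..b, ‖(inner 𝕜 (g x) (v i) : 𝕜)‖ ^ 2) ∧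
    ∑' i, ∫ x in a..b, ‖(inner 𝕜 (g x) (v i) : 𝕜)‖ ^ 2 ≤ ∫ x in a..b, ‖g x‖ ^ 2 := by
  have hcoeff : ∀ i, ContinuousOn (fun x => ‖(inner 𝕜 (g x) (v i) : 𝕜)‖ ^ 2) (Icc a b) :=
    fun i => ((hg.inner continuousOn_const).norm).pow 2
  have hnonneg : 0 ≤ fun i => ∫ x in a..b, ‖(inner 𝕜 (g x) (v i) : 𝕜)‖ ^ 2 :=
    fun i => intervalIntegral.integral_nonneg hab fun x _ => sq_nonneg _
  have hpartial : ∀ s : Finset ι,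
      ∑ i ∈ s, ∫ x in a..b, ‖(inner 𝕜 (g x) (v i) : 𝕜)‖ ^ 2 ≤ ∫ x in a..b, ‖g x‖ ^ 2 := by
    intro s
    rw [← intervalIntegral.integral_finsetSum fun i _ => (hcoeff i).intervalIntegrable_of_Icc hab]
    refine intervalIntegral.integral_mono_on hab
      ((continuousOn_finsetSum _ fun i _ => hcoeff i).intervalIntegrable_of_Icc hab)
      ((hg.norm.pow 2).intervalIntegrable_of_Icc hab) fun x _ => ?_
    simpa only [norm_inner_symm] using hv.sum_inner_products_le (g x) (s := s)
  exact ⟨summable_of_sum_le hnonneg hpartial, Real.tsum_le_of_sum_le hnonneg hpartial⟩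

theorem intervalIntegral_le_mul_iSup {h : ℝ → ℝ} {a b : ℝ} {K : Set ℝ} (hab : a ≤ b)
    (hK : IsCompact K) (hsub : Icc a b ⊆ K) (hh : ContinuousOn h K) :
    ∫ x in a..b, h x ≤ (b - a) * ⨆ x : K, h x := by
  have hbdd : BddAbove (range fun x : K => h x) := by
    rw [← image_eq_range]
    exact hK.bddAbove_image hh
  calc ∫ x in a..b, h x ≤ ∫ _ in a..b, ⨆ x : K, h x :=
        intervalIntegral.integral_mono_on hab ((hh.mono hsub).intervalIntegrable_of_Icc hab)
          intervalIntegrable_const fun x hx => le_ciSup hbdd ⟨x, hsub hx⟩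
    _ = (b - a) * ⨆ x : K, h x := by rw [intervalIntegral.integral_const, smul_eq_mul]

theorem sq_mul_norm_integral_sin_mul_inner_le {E : Type*} [NormedAddCommGroup E]
    [InnerProductSpace ℂ E] {f f' : ℝ → E} {a b : ℝ} (ω : ℝ) (e : E) (hab : a ≤ b)
    (hf : ∀ x ∈ Icc a b, HasDerivWithinAt f (f' x) (Icc a b) x)
    (hf' : ContinuousOn f' (Icc a b)) :
    ω ^ 2 * ‖∫ x in a..b, (sin (ω * x) : ℂ) * inner ℂ (f x) e‖ ^ 2
      ≤ 3 * (‖(inner ℂ (f b) e : ℂ)‖ ^ 2 + ‖(inner ℂ (f a) e : ℂ)‖ ^ 2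
        + (b - a) * ∫ x in a..b, ‖(inner ℂ (f' x) e : ℂ)‖ ^ 2) := by
  have hderiv : ∀ x ∈ Icc a b, HasDerivWithinAt (fun x => (inner ℂ (f x) e : ℂ))
      (inner ℂ (f' x) e) (Icc a b) x := fun x hx => by
    simpa using (hf x hx).inner ℂ (hasDerivWithinAt_const x _ e)
  simpa only [Complex.real_smul] using
    sq_mul_norm_integral_sin_smul_sq_le ω hab hderiv (hf'.inner continuousOn_const)

theorem stmt6_general
    (φ : HilbertBasis ℕ ℂ (Lp ℂ 2 μ01))
    (lam : ℕ → ℝ) (hlam : ∀ n, 1 ≤ lam n)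
    (T : ℝ)
    (f f' : ℝ → Lp ℂ 2 μ01)
    (hf : ∀ s ∈ Set.Icc (0:ℝ) T, HasDerivWithinAt f (f' s) (Set.Icc (0:ℝ) T) s)
    (hf' : ContinuousOn f' (Set.Icc 0 T))
    (t : ℝ) (ht : t ∈ Set.Icc (0:ℝ) T) :
    Summable (fun n => lam n *
        ‖∫ s in (0:ℝ)..t, (Real.sin (Real.sqrt (lam n) * s) : ℂ) * (inner ℂ (f s) (φ n) : ℂ)‖ ^ 2) ∧
    ∑' n, lam n *
        ‖∫ s in (0:ℝ)..t, (Real.sin (Real.sqrt (lam n) * s) : ℂ) * (inner ℂ (f s) (φ n) : ℂ)‖ ^ 2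
      ≤ 3 * (‖f t‖ ^ 2 + ‖f 0‖ ^ 2 + T ^ 2 * ⨆ s : Set.Icc (0:ℝ) T, ‖f' s‖ ^ 2) := by
  obtain ⟨ht0, htT⟩ := ht
  have hsub : Icc 0 t ⊆ Icc 0 T := Icc_subset_Icc_right htT
  have hmode := fun n => by
    simpa only [sq_sqrt (zero_le_one.trans (hlam n)), sub_zero] using
      sq_mul_norm_integral_sin_mul_inner_le √(lam n) (φ n) ht0
        (fun s hs => (hf s (hsub hs)).mono hsub) (hf'.mono hsub)
  obtain ⟨hC, hCle⟩ := φ.orthonormal.summable_intervalIntegral_norm_inner_sq ht0 (hf'.mono hsub)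
  have hsup := intervalIntegral_le_mul_iSup (h := fun s => ‖f' s‖ ^ 2) ht0 isCompact_Icc hsub
    (hf'.norm.pow 2)
  have hsum := (((φ.hasSum_norm_inner_sq (f t)).add (φ.hasSum_norm_inner_sq (f 0))).add
    (hC.hasSum.mul_left t)).mul_left 3
  have hsummable := hsum.summable.of_nonneg_of_le
    (fun n => mul_nonneg (zero_le_one.trans (hlam n)) (sq_nonneg _)) hmode
  refine ⟨hsummable, (hsummable.tsum_le_tsum hmode hsum.summable).trans ?_⟩
  rw [hsum.tsum_eq]
  gcongr 3 * (_ + _ + ?_)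
  calc _ ≤ t * (t * ⨆ s : Icc (0:ℝ) T, ‖f' s‖ ^ 2) := by
        gcongr
        simpa only [sub_zero] using hCle.trans hsup
    _ ≤ T ^ 2 * ⨆ s : Icc (0:ℝ) T, ‖f' s‖ ^ 2 := by
        rw [← mul_assoc, ← sq]
        gcongr
        exact Real.iSup_nonneg fun _ => sq_nonneg _

/-- The estimate of the term `J₁` in the proof of the theorem on the non-homogeneous
wave equation, obtained by integration by parts and Parseval's identity. -/
theorem stmt6
    (φ : HilbertBasis ℕ ℂ (Lp ℂ 2 μ01))
    (lam : ℕ → ℝ) (hlam : ∀ n, 1 ≤ lam n)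
    (T : ℝ) (hT : 0 < T)
    (f f' : ℝ → Lp ℂ 2 μ01)
    (hf : ∀ s ∈ Set.Icc (0:ℝ) T, HasDerivWithinAt f (f' s) (Set.Icc (0:ℝ) T) s)
    (hf' : ContinuousOn f' (Set.Icc 0 T))
    (t : ℝ) (ht : t ∈ Set.Icc (0:ℝ) T) :
    Summable (fun n => lam n *
        ‖∫ s in (0:ℝ)..t, (Real.sin (Real.sqrt (lam n) * s) : ℂ) * (inner ℂ (f s) (φ n) : ℂ)‖ ^ 2) ∧
    ∑' n, lam n *
        ‖∫ s in (0:ℝ)..t, (Real.sin (Real.sqrt (lam n) * s) : ℂ) * (inner ℂ (f s) (φ n) : ℂ)‖ ^ 2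
      ≤ 3 * (‖f t‖ ^ 2 + ‖f 0‖ ^ 2 + T ^ 2 * ⨆ s : Set.Icc (0:ℝ) T, ‖f' s‖ ^ 2) :=
  stmt6_general φ lam hlam T f f' hf hf' t ht

end
end

section
/- Let T > 0 and let f : [0,T] → L²(0,1) be continuous with f_n(t) := ⟨f(t), φ_n⟩. For t ∈ [0,T] set u_n(t) := A_n cos(√λ_n t) + λ_n^{-1/2} B_n sin(√λ_n t) − λ_n^{-1/2} cos(√λ_n t) ∫₀ᵗ sin(√λ_n s) f_n(s) ds + λ_n^{-1/2} sin(√λ_n t) ∫₀ᵗ cos(√λ_n s) f_n(s) ds. Then for every t ∈ [0,T] the sequence (u_n(t))_{n≥1} is square-summable and the element u(t) := Σ_{n≥1} u_n(t) φ_n of L²(0,1) satisfies ‖u(t)‖²_{L²(0,1)} ≤ 4 ( Σ_{n≥1} |A_n|² + Σ_{n≥1} λ_n^{-1} |B_n|² + 2 T² sup_{s ∈ [0,T]} ‖f(s)‖²_{L²(0,1)} ). -/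
/-!
By the triangle inequality, with `|cos|, |sin| ≤ 1`, `λₙ^{-1/2} ≤ 1` and
`(x₁ + x₂ + x₃ + x₄)² ≤ 4 ∑ xᵢ²`, `|uₙ(t)|² ≤ 4 (|Aₙ|² + λₙ⁻¹ |Bₙ|² + |Iₙ|² + |Jₙ|²)`, where
`Iₙ, Jₙ` are the two Duhamel integrals. Cauchy–Schwarz gives `|Iₙ|², |Jₙ|² ≤ t ∫₀ᵗ |fₙ|²`, and
Bessel's inequality `∑ₙ |fₙ(s)|² ≤ ‖f(s)‖²`, integrated over `[0, t]`, gives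
`∑ₙ ∫₀ᵗ |fₙ|² ≤ t sup ‖f‖²`. Parseval identifies `‖u(t)‖²` with `∑ₙ |uₙ(t)|²`.
-/

open MeasureTheory Real Set

noncomputable section

namespace intervalIntegral

theorem sq_integral_le_mul_integral_sq {a b : ℝ} (hab : a ≤ b) {g : ℝ → ℝ}
    (hg : IntervalIntegrable g volume a b)
    (hg2 : IntervalIntegrable (fun s => g s ^ 2) volume a b) :
    (∫ s in a..b, g s) ^ 2 ≤ (b - a) * ∫ s in a..b, g s ^ 2 := by
  rcases hab.eq_or_lt with rfl | hab
  · simp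
  -- expand `0 ≤ ∫ (g - c)²` at the mean value `c` of `g`
  set c := (∫ s in a..b, g s) / (b - a)
  have hvar : 0 ≤ ∫ s in a..b, (g s - c) ^ 2 :=
    integral_nonneg hab.le fun s _ => sq_nonneg _
  have hexpand : ∫ s in a..b, (g s - c) ^ 2
      = (∫ s in a..b, g s ^ 2) - 2 * c * (∫ s in a..b, g s) + c ^ 2 * (b - a) := by
    simp_rw [sub_sq, mul_right_comm 2 _ c]
    rw [integral_add (hg2.sub (hg.const_mul _)) intervalIntegrable_const,
      integral_sub hg2 (hg.const_mul _), integral_const_mul, integral_const, smul_eq_mul]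
    ring
  have hmean : c * (b - a) = ∫ s in a..b, g s := div_mul_cancel₀ _ (sub_pos.2 hab).ne'
  nlinarith

theorem norm_integral_mul_sq_le {𝕜 : Type*} [RCLike 𝕜] {a b : ℝ} (hab : a ≤ b) {w g : ℝ → 𝕜}
    (hg : ContinuousOn g (Icc a b))
    (hw : ∀ s ∈ Icc a b, ‖w s‖ ≤ 1) :
    ‖∫ s in a..b, w s * g s‖ ^ 2 ≤ (b - a) * ∫ s in a..b, ‖g s‖ ^ 2 := by
  rw [← uIcc_of_le hab] at hg
  have hnorm : ‖∫ s in a..b, w s * g s‖ ≤ ∫ s in a..b, ‖g s‖ := by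
    refine norm_integral_le_of_norm_le hab (ae_of_all _ fun s hs => ?_)
      hg.norm.intervalIntegrable
    rw [norm_mul]
    exact mul_le_of_le_one_left (norm_nonneg _) (hw s (Ioc_subset_Icc_self hs))
  calc ‖∫ s in a..b, w s * g s‖ ^ 2 ≤ (∫ s in a..b, ‖g s‖) ^ 2 :=
        pow_le_pow_left₀ (norm_nonneg _) hnorm 2
    _ ≤ (b - a) * ∫ s in a..b, ‖g s‖ ^ 2 :=
        sq_integral_le_mul_integral_sq hab hg.norm.intervalIntegrable
          (hg.norm.pow 2).intervalIntegrable

theorem integral_le_mul_iSup_Icc {a b t : ℝ} {g : ℝ → ℝ} (hg : ContinuousOn g (Icc a b))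
    (ht : t ∈ Icc a b) :
    ∫ s in a..t, g s ≤ (t - a) * ⨆ s : Icc a b, g s := by
  have hbdd : BddAbove (range fun s : Icc a b => g s) := by
    rw [← image_eq_range]; exact isCompact_Icc.bddAbove_image hg
  have hsub : Icc a t ⊆ Icc a b := Icc_subset_Icc_right ht.2
  have hgt : ContinuousOn g (uIcc a t) := uIcc_of_le ht.1 ▸ hg.mono hsub
  calc ∫ s in a..t, g s ≤ ∫ _ in a..t, ⨆ s : Icc a b, g s :=
        integral_mono_on ht.1 hgt.intervalIntegrable intervalIntegrable_const
          fun s hs => le_ciSup hbdd ⟨s, hsub hs⟩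
    _ = (t - a) * ⨆ s : Icc a b, g s := by rw [integral_const, smul_eq_mul]

end intervalIntegral

section InnerProductSpace

variable {ι 𝕜 E : Type*} [RCLike 𝕜] [NormedAddCommGroup E] [InnerProductSpace 𝕜 E]

theorem Orthonormal.sum_integral_norm_inner_sq_le {v : ι → E} (hv : Orthonormal 𝕜 v)
    {a b : ℝ} (hab : a ≤ b) {F : ℝ → E} (hF : ContinuousOn F (Icc a b)) (u : Finset ι) :
    ∑ i ∈ u, ∫ s in a..b, ‖inner 𝕜 (F s) (v i)‖ ^ 2 ≤ ∫ s in a..b, ‖F s‖ ^ 2 := by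
  rw [← uIcc_of_le hab] at hF
  have hcoeff : ∀ i, ContinuousOn (fun s => ‖inner 𝕜 (F s) (v i)‖ ^ 2) (uIcc a b) := fun i =>
    ((continuous_inner.comp_continuousOn (hF.prodMk continuousOn_const)).norm.pow 2)
  rw [← intervalIntegral.integral_finsetSum fun i _ => (hcoeff i).intervalIntegrable]
  refine intervalIntegral.integral_mono_on hab
    (continuousOn_finsetSum _ fun i _ => hcoeff i).intervalIntegrable
    (hF.norm.pow 2).intervalIntegrable fun s _ => ?_
  simpa only [norm_inner_symm] using hv.sum_inner_products_le (F s) (s := u)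

theorem HilbertBasis.norm_tsum_smul_sq (b : HilbertBasis ι 𝕜 E) {c : ι → 𝕜}
    (hc : Summable fun i => ‖c i‖ ^ 2) :
    ‖∑' i, c i • b i‖ ^ 2 = ∑' i, ‖c i‖ ^ 2 := by
  let c₂ : lp (fun _ : ι => 𝕜) 2 := ⟨c, memℓp_gen (by simpa using hc)⟩
  have hnorm := lp.norm_rpow_eq_tsum (p := 2) (by simp) c₂
  rw [(b.hasSum_repr_symm c₂).tsum_eq, LinearIsometryEquiv.norm_map]
  simpa using hnorm

theorem Orthonormal.tsum_norm_integral_mul_inner_sq_le {v : ι → E} (hv : Orthonormal 𝕜 v)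
    {a b : ℝ} (hab : a ≤ b) {F : ℝ → E} (hF : ContinuousOn F (Icc a b)) {w : ι → ℝ → 𝕜}
    (hw : ∀ i, ∀ s ∈ Icc a b, ‖w i s‖ ≤ 1) :
    Summable (fun i => ‖∫ s in a..b, w i s * inner 𝕜 (F s) (v i)‖ ^ 2) ∧
      ∑' i, ‖∫ s in a..b, w i s * inner 𝕜 (F s) (v i)‖ ^ 2
        ≤ (b - a) * ∫ s in a..b, ‖F s‖ ^ 2 := by
  set G := fun i => ∫ s in a..b, ‖inner 𝕜 (F s) (v i)‖ ^ 2
  have hG0 : 0 ≤ G := fun i => intervalIntegral.integral_nonneg hab fun s _ => sq_nonneg _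
  have hGsum : Summable G := summable_of_sum_le hG0 (hv.sum_integral_norm_inner_sq_le hab hF)
  have hGtsum : ∑' i, G i ≤ ∫ s in a..b, ‖F s‖ ^ 2 :=
    Real.tsum_le_of_sum_le hG0 (hv.sum_integral_norm_inner_sq_le hab hF)
  have hle : ∀ i, ‖∫ s in a..b, w i s * inner 𝕜 (F s) (v i)‖ ^ 2 ≤ (b - a) * G i := fun i =>
    intervalIntegral.norm_integral_mul_sq_le hab
      (continuous_inner.comp_continuousOn (hF.prodMk continuousOn_const)) (hw i)
  have hsum := (hGsum.mul_left (b - a)).of_nonneg_of_le (fun i => sq_nonneg _) hle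
  refine ⟨hsum, ?_⟩
  calc ∑' i, ‖∫ s in a..b, w i s * inner 𝕜 (F s) (v i)‖ ^ 2 ≤ ∑' i, (b - a) * G i :=
        hsum.tsum_le_tsum hle (hGsum.mul_left _)
    _ = (b - a) * ∑' i, G i := tsum_mul_left
    _ ≤ (b - a) * ∫ s in a..b, ‖F s‖ ^ 2 := mul_le_mul_of_nonneg_left hGtsum (sub_nonneg.2 hab)

theorem Orthonormal.tsum_norm_integral_mul_inner_sq_le_sq_mul_iSup {v : ι → E}
    (hv : Orthonormal 𝕜 v) {T t : ℝ} {F : ℝ → E} (hF : ContinuousOn F (Icc 0 T))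
    (ht : t ∈ Icc 0 T) {w : ι → ℝ → 𝕜} (hw : ∀ i, ∀ s ∈ Icc 0 t, ‖w i s‖ ≤ 1) :
    Summable (fun i => ‖∫ s in (0:ℝ)..t, w i s * inner 𝕜 (F s) (v i)‖ ^ 2) ∧
      ∑' i, ‖∫ s in (0:ℝ)..t, w i s * inner 𝕜 (F s) (v i)‖ ^ 2
        ≤ T ^ 2 * ⨆ s : Icc (0:ℝ) T, ‖F s‖ ^ 2 := by
  obtain ⟨hsum, hle⟩ :=
    hv.tsum_norm_integral_mul_inner_sq_le ht.1 (hF.mono (Icc_subset_Icc_right ht.2)) hw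
  refine ⟨hsum, hle.trans ?_⟩
  have hM := intervalIntegral.integral_le_mul_iSup_Icc (g := fun s => ‖F s‖ ^ 2)
    (hF.norm.pow 2) ht
  have hM0 : 0 ≤ ⨆ s : Icc (0:ℝ) T, ‖F s‖ ^ 2 := Real.iSup_nonneg fun _ => sq_nonneg _
  rw [sub_zero] at hM ⊢
  calc t * ∫ s in (0:ℝ)..t, ‖F s‖ ^ 2 ≤ t ^ 2 * ⨆ s : Icc (0:ℝ) T, ‖F s‖ ^ 2 := by
        rw [sq, mul_assoc]; exact mul_le_mul_of_nonneg_left hM ht.1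
    _ ≤ T ^ 2 * ⨆ s : Icc (0:ℝ) T, ‖F s‖ ^ 2 :=
        mul_le_mul_of_nonneg_right (pow_le_pow_left₀ ht.1 ht.2 2) hM0

end InnerProductSpace

theorem norm_duhamel_coeff_sq_le {a b I J : ℂ} {r θ : ℝ} (hr : 1 ≤ r) :
    ‖a * (cos θ : ℂ) + (r : ℂ)⁻¹ * b * (sin θ : ℂ) - (r : ℂ)⁻¹ * (cos θ : ℂ) * I
        + (r : ℂ)⁻¹ * (sin θ : ℂ) * J‖ ^ 2
      ≤ 4 * (‖a‖ ^ 2 + (r ^ 2)⁻¹ * ‖b‖ ^ 2 + ‖I‖ ^ 2 + ‖J‖ ^ 2) := by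
  have hr0 : 0 < r := one_pos.trans_le hr
  have hcos : ‖(cos θ : ℂ)‖ ≤ 1 := by rw [Complex.norm_real]; exact abs_cos_le_one θ
  have hsin : ‖(sin θ : ℂ)‖ ≤ 1 := by rw [Complex.norm_real]; exact abs_sin_le_one θ
  have hrinv : ‖(r : ℂ)⁻¹‖ = r⁻¹ := by rw [norm_inv, Complex.norm_real, norm_of_nonneg hr0.le]
  have hrinv1 : r⁻¹ ≤ 1 := inv_le_one_of_one_le₀ hr
  have htri : ‖a * (cos θ : ℂ) + (r : ℂ)⁻¹ * b * (sin θ : ℂ) - (r : ℂ)⁻¹ * (cos θ : ℂ) * I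
        + (r : ℂ)⁻¹ * (sin θ : ℂ) * J‖ ≤ ‖a‖ + r⁻¹ * ‖b‖ + ‖I‖ + ‖J‖ := by
    refine (norm_add_le _ _).trans (add_le_add ((norm_sub_le _ _).trans
      (add_le_add ((norm_add_le _ _).trans (add_le_add ?_ ?_)) ?_)) ?_) <;>
      simp only [norm_mul, hrinv]
    · exact mul_le_of_le_one_right (norm_nonneg _) hcos
    · exact mul_le_of_le_one_right (by positivity) hsin
    · exact mul_le_of_le_one_left (norm_nonneg _) (mul_le_one₀ hrinv1 (norm_nonneg _) hcos)
    · exact mul_le_of_le_one_left (norm_nonneg _) (mul_le_one₀ hrinv1 (norm_nonneg _) hsin)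
  calc _ ≤ (‖a‖ + r⁻¹ * ‖b‖ + ‖I‖ + ‖J‖) ^ 2 := pow_le_pow_left₀ (norm_nonneg _) htri 2
    _ ≤ 4 * (‖a‖ ^ 2 + (r⁻¹ * ‖b‖) ^ 2 + ‖I‖ ^ 2 + ‖J‖ ^ 2) := by
      nlinarith [sq_nonneg (‖a‖ - r⁻¹ * ‖b‖), sq_nonneg (‖a‖ - ‖I‖), sq_nonneg (‖a‖ - ‖J‖),
        sq_nonneg (r⁻¹ * ‖b‖ - ‖I‖), sq_nonneg (r⁻¹ * ‖b‖ - ‖J‖), sq_nonneg (‖I‖ - ‖J‖)]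
    _ = 4 * (‖a‖ ^ 2 + (r ^ 2)⁻¹ * ‖b‖ ^ 2 + ‖I‖ ^ 2 + ‖J‖ ^ 2) := by rw [mul_pow, inv_pow]

theorem stmt9_general
    (φ : HilbertBasis ℕ ℂ (Lp ℂ 2 μ01))
    (lam : ℕ → ℝ) (hlam : ∀ n, 1 ≤ lam n)
    (u₀ u₁ : Lp ℂ 2 μ01)
    (A B : ℕ → ℂ)
    (hA : ∀ n, A n = (inner ℂ u₀ (φ n) : ℂ))
    (hB : ∀ n, B n = (inner ℂ u₁ (φ n) : ℂ))
    (T : ℝ)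
    (f : ℝ → Lp ℂ 2 μ01) (hf : ContinuousOn f (Set.Icc 0 T))
    (U : ℕ → ℝ → ℂ)
    (hU : ∀ n t, U n t =
      A n * (Real.cos (Real.sqrt (lam n) * t) : ℂ)
      + ((Real.sqrt (lam n) : ℂ))⁻¹ * B n * (Real.sin (Real.sqrt (lam n) * t) : ℂ)
      - ((Real.sqrt (lam n) : ℂ))⁻¹ * (Real.cos (Real.sqrt (lam n) * t) : ℂ)
          * (∫ s in (0:ℝ)..t, (Real.sin (Real.sqrt (lam n) * s) : ℂ) * (inner ℂ (f s) (φ n) : ℂ))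
      + ((Real.sqrt (lam n) : ℂ))⁻¹ * (Real.sin (Real.sqrt (lam n) * t) : ℂ)
          * (∫ s in (0:ℝ)..t, (Real.cos (Real.sqrt (lam n) * s) : ℂ) * (inner ℂ (f s) (φ n) : ℂ)))
    (t : ℝ) (ht : t ∈ Set.Icc (0:ℝ) T) :
    Summable (fun n => ‖U n t‖ ^ 2) ∧
    ‖∑' n, U n t • φ n‖ ^ 2
      ≤ 4 * ((∑' n, ‖A n‖ ^ 2) + (∑' n, (lam n)⁻¹ * ‖B n‖ ^ 2)
          + 2 * T ^ 2 * ⨆ s : Set.Icc (0:ℝ) T, ‖f s‖ ^ 2) := by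
  obtain ⟨hsumI, hI⟩ := φ.orthonormal.tsum_norm_integral_mul_inner_sq_le_sq_mul_iSup hf ht
    (w := fun n s => (sin (√(lam n) * s) : ℂ))
    fun n s _ => by simpa only [Complex.norm_real, norm_eq_abs] using abs_sin_le_one _
  obtain ⟨hsumJ, hJ⟩ := φ.orthonormal.tsum_norm_integral_mul_inner_sq_le_sq_mul_iSup hf ht
    (w := fun n s => (cos (√(lam n) * s) : ℂ))
    fun n s _ => by simpa only [Complex.norm_real, norm_eq_abs] using abs_cos_le_one _
  have hsumA : Summable fun n => ‖A n‖ ^ 2 :=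
    (φ.orthonormal.inner_products_summable u₀).congr fun n => by rw [hA, norm_inner_symm]
  have hsumB : Summable fun n => (lam n)⁻¹ * ‖B n‖ ^ 2 :=
    (φ.orthonormal.inner_products_summable u₁).of_nonneg_of_le
      (fun n => mul_nonneg (inv_nonneg.2 (zero_le_one.trans (hlam n))) (sq_nonneg _))
      fun n => by
        rw [hB, norm_inner_symm]
        exact mul_le_of_le_one_left (sq_nonneg _) (inv_le_one_of_one_le₀ (hlam n))
  have hcoeff : ∀ n, ‖U n t‖ ^ 2 ≤ 4 * (‖A n‖ ^ 2 + (lam n)⁻¹ * ‖B n‖ ^ 2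
      + ‖∫ s in (0:ℝ)..t, (sin (√(lam n) * s) : ℂ) * inner ℂ (f s) (φ n)‖ ^ 2
      + ‖∫ s in (0:ℝ)..t, (cos (√(lam n) * s) : ℂ) * inner ℂ (f s) (φ n)‖ ^ 2) := fun n => by
    calc ‖U n t‖ ^ 2 ≤ 4 * (‖A n‖ ^ 2 + (√(lam n) ^ 2)⁻¹ * ‖B n‖ ^ 2 + _ + _) := by
          rw [hU]; exact norm_duhamel_coeff_sq_le (one_le_sqrt.2 (hlam n))
      _ = _ := by rw [sq_sqrt (zero_le_one.trans (hlam n))]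
  have hsum4 := (((hsumA.add hsumB).add hsumI).add hsumJ).mul_left 4
  have hsumU := hsum4.of_nonneg_of_le (fun n => sq_nonneg _) hcoeff
  refine ⟨hsumU, ?_⟩
  rw [φ.norm_tsum_smul_sq hsumU]
  refine (hsumU.tsum_le_tsum hcoeff hsum4).trans ?_
  rw [tsum_mul_left, ((hsumA.add hsumB).add hsumI).tsum_add hsumJ,
    (hsumA.add hsumB).tsum_add hsumI, hsumA.tsum_add hsumB]
  linarith

/-- Estimate (es-nh1) for the Duhamel series solution of the non-homogeneous
wave equation, in Fourier-coefficient form. -/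
theorem stmt9
    (φ : HilbertBasis ℕ ℂ (Lp ℂ 2 μ01))
    (lam : ℕ → ℝ) (hlam : ∀ n, 1 ≤ lam n)
    (u₀ u₁ : Lp ℂ 2 μ01)
    (A B : ℕ → ℂ)
    (hA : ∀ n, A n = (inner ℂ u₀ (φ n) : ℂ))
    (hB : ∀ n, B n = (inner ℂ u₁ (φ n) : ℂ))
    (T : ℝ) (hT : 0 < T)
    (f : ℝ → Lp ℂ 2 μ01) (hf : ContinuousOn f (Set.Icc 0 T))
    (U : ℕ → ℝ → ℂ)
    (hU : ∀ n t, U n t =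
      A n * (Real.cos (Real.sqrt (lam n) * t) : ℂ)
      + ((Real.sqrt (lam n) : ℂ))⁻¹ * B n * (Real.sin (Real.sqrt (lam n) * t) : ℂ)
      - ((Real.sqrt (lam n) : ℂ))⁻¹ * (Real.cos (Real.sqrt (lam n) * t) : ℂ)
          * (∫ s in (0:ℝ)..t, (Real.sin (Real.sqrt (lam n) * s) : ℂ) * (inner ℂ (f s) (φ n) : ℂ))
      + ((Real.sqrt (lam n) : ℂ))⁻¹ * (Real.sin (Real.sqrt (lam n) * t) : ℂ)
          * (∫ s in (0:ℝ)..t, (Real.cos (Real.sqrt (lam n) * s) : ℂ) * (inner ℂ (f s) (φ n) : ℂ)))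
    (t : ℝ) (ht : t ∈ Set.Icc (0:ℝ) T) :
    Summable (fun n => ‖U n t‖ ^ 2) ∧
    ‖∑' n, U n t • φ n‖ ^ 2
      ≤ 4 * ((∑' n, ‖A n‖ ^ 2) + (∑' n, (lam n)⁻¹ * ‖B n‖ ^ 2)
          + 2 * T ^ 2 * ⨆ s : Set.Icc (0:ℝ) T, ‖f s‖ ^ 2) :=
  stmt9_general φ lam hlam u₀ u₁ A B hA hB T f hf U hU t ht
end
end
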